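/- Let ρ ≠ 0 and α be real numbers and define Θ(ξ,η) = (√3/2)(ρξ − η/ρ) − α. Then on the open set where sinh Θ ≠ 0, the real-valued function φ(ξ,η) = (1/2)·ln[(3/2)·coth²Θ − 1/2] satisfies the T2 Tzitzeica equation: 2 ∂²φ/∂ξ∂η = −(e^{2φ} − e^{−4φ}). -/

import Mathlib

/-!
The solution is a travelling wave `φ = F(Θ)` with `F t = ½ log((3/2) coth² t - ½)`. Since `Θ` is
affine with `Θ_ξ Θ_η = -3/4`, the equation reduces to the ODE `F'' = (2/3)(e^{2F} - e^{-4F})`.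
With `u = coth t`, which solves the Riccati equation `u' = 1 - u²`, both sides are rational
functions of `u` (note `e^{2F} = (3u² - 1)/2`), and the ODE becomes an identity of such functions.
-/

/-- The mixed second partial derivative ∂²f/∂ξ∂η (first in η, then in ξ). -/
noncomputable def mixedDeriv (f : ℝ → ℝ → ℝ) (ξ η : ℝ) : ℝ :=
  deriv (fun x => deriv (fun y => f x y) η) ξ

/-- The hyperbolic cotangent `coth x = cosh x / sinh x`. -/
noncomputable def rcoth (x : ℝ) : ℝ := Real.cosh x / Real.sinh x

open Real Topology

theorem mixedDeriv_comp_affine {F F' : ℝ → ℝ} {F'' a b c ξ η : ℝ}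
    (hF : ∀ᶠ t in 𝓝 (a * ξ + b * η + c), HasDerivAt F (F' t) t)
    (hF' : HasDerivAt F' F'' (a * ξ + b * η + c)) :
    mixedDeriv (fun x y => F (a * x + b * y + c)) ξ η = a * b * F'' := by
  have hx : ∀ x : ℝ, HasDerivAt (fun x => a * x + b * η + c) a x := fun x => by
    simpa using (((hasDerivAt_id x).const_mul a).add_const (b * η)).add_const c
  have hy : ∀ x : ℝ, HasDerivAt (fun y => a * x + b * y + c) b η := fun x => by
    simpa using (((hasDerivAt_id η).const_mul b).const_add (a * x)).add_const c
  have hinner : ∀ᶠ x in 𝓝 ξ,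
      deriv (fun y => F (a * x + b * y + c)) η = F' (a * x + b * η + c) * b :=
    ((hx ξ).continuousAt.eventually hF).mono fun x hFx => (hFx.comp η (hy x)).deriv
  exact (((hF'.comp ξ (hx ξ)).mul_const b).congr_of_eventuallyEq hinner).deriv.trans (by ring)

theorem hasDerivAt_rcoth {t : ℝ} (ht : sinh t ≠ 0) : HasDerivAt rcoth (1 - rcoth t ^ 2) t := by
  refine ((hasDerivAt_cosh t).fun_div (hasDerivAt_sinh t) ht).congr_deriv ?_
  rw [rcoth]
  field_simp

theorem one_lt_rcoth_sq {t : ℝ} (ht : sinh t ≠ 0) : 1 < rcoth t ^ 2 := by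
  rw [rcoth, div_pow, one_lt_div (by positivity), cosh_sq]
  linarith

noncomputable def cothProfile (t : ℝ) : ℝ := 1 / 2 * log (3 / 2 * rcoth t ^ 2 - 1 / 2)

noncomputable def cothProfileSlope (t : ℝ) : ℝ :=
  3 * rcoth t * (1 - rcoth t ^ 2) / (3 * rcoth t ^ 2 - 1)

theorem exp_two_mul_cothProfile {t : ℝ} (ht : sinh t ≠ 0) :
    exp (2 * cothProfile t) = 3 / 2 * rcoth t ^ 2 - 1 / 2 := by
  rw [cothProfile, ← mul_assoc, mul_one_div_cancel two_ne_zero, one_mul, exp_log]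
  linarith [one_lt_rcoth_sq ht]

theorem hasDerivAt_cothProfile {t : ℝ} (ht : sinh t ≠ 0) :
    HasDerivAt cothProfile (cothProfileSlope t) t := by
  have hpos : 0 < 3 / 2 * rcoth t ^ 2 - 1 / 2 := by linarith [one_lt_rcoth_sq ht]
  refine (((((hasDerivAt_rcoth ht).fun_pow 2).const_mul (3 / 2)).sub_const (1 / 2)).log
    hpos.ne' |>.const_mul (1 / 2)).congr_deriv ?_
  rw [cothProfileSlope]
  field_simp
  ring

theorem hasDerivAt_cothProfileSlope {t : ℝ} (ht : sinh t ≠ 0) :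
    HasDerivAt cothProfileSlope
      (2 / 3 * (exp (2 * cothProfile t) - exp (-4 * cothProfile t))) t := by
  have hne : 3 * rcoth t ^ 2 - 1 ≠ 0 := by linarith [one_lt_rcoth_sq ht]
  have hu := hasDerivAt_rcoth ht
  refine (((hu.const_mul 3).fun_mul ((hu.fun_pow 2).const_sub 1)).fun_div
    (((hu.fun_pow 2).const_mul 3).sub_const 1) hne).congr_deriv ?_
  rw [show -4 * cothProfile t = -(2 * (2 * cothProfile t)) by ring, exp_neg,
    show 2 * (2 * cothProfile t) = 2 * cothProfile t + 2 * cothProfile t by ring, exp_add,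
    exp_two_mul_cothProfile ht]
  field_simp
  ring

/-- With `Θ = (√3/2)(ρξ - η/ρ) - α`, on the set where `sinh Θ ≠ 0` the
quasi-regular soliton `φ = (1/2)·ln[(3/2)coth²Θ - 1/2]` satisfies the T2
Tzitzeica equation `2 φ_{ξη} = -(e^{2φ} - e^{-4φ})`. -/
theorem stmt_17 (ρ α : ℝ) (hρ : ρ ≠ 0)
    (Θ : ℝ → ℝ → ℝ)
    (hΘ : ∀ ξ η : ℝ, Θ ξ η = (Real.sqrt 3 / 2) * (ρ * ξ - η / ρ) - α)
    (φ : ℝ → ℝ → ℝ)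
    (hφ : ∀ ξ η : ℝ, φ ξ η =
      (1 / 2) * Real.log ((3 / 2) * rcoth (Θ ξ η) ^ 2 - 1 / 2)) :
    ∀ ξ η : ℝ, Real.sinh (Θ ξ η) ≠ 0 →
      2 * mixedDeriv φ ξ η = -(Real.exp (2 * φ ξ η) - Real.exp (-4 * φ ξ η)) := by
  intro ξ η hs
  set a := √3 / 2 * ρ with ha
  set b := -(√3 / 2) / ρ with hb
  have hΘ_affine : ∀ x y, Θ x y = a * x + b * y + -α := fun x y => by rw [hΘ]; ring
  have hφ_comp : φ = fun x y => cothProfile (a * x + b * y + -α) := by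
    funext x y
    rw [hφ, hΘ_affine, cothProfile]
  have hab : a * b = -(3 / 4) := by
    rw [ha, hb]
    field_simp
    rw [sq_sqrt (by norm_num : (0 : ℝ) ≤ 3)]
    norm_num
  rw [hΘ_affine] at hs
  have hmixed := mixedDeriv_comp_affine
    ((continuous_sinh.continuousAt.eventually_ne hs).mono fun _ => hasDerivAt_cothProfile)
    (hasDerivAt_cothProfileSlope hs)
  rw [hφ_comp, hmixed, hab]
  ring
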